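/- Let V be a Jordan bimodule over Kan(n). If I ⊊ {1,...,n} is a proper subset (I ≠ {1,...,n}), then [R_{e_I}, R_{\bar{1}}]_s = 0. -/
import Mathlib


open Finset in
/-- The Grassmann algebra `G_n` on `n` odd generators, realized as coefficient
functions on subsets of `{1,...,n}` (the basis is `e_I`, `I ⊆ {1,...,n}`). -/
abbrev Gn (n : ℕ) (F : Type) := Finset (Fin n) → F

/-- The sign `(-1)^{#{(i,j) ∈ I×J : j < i}}` arising when multiplying `e_I · e_J`. -/
def gsign {n : ℕ} (I J : Finset (Fin n)) : ℤ :=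
  (-1) ^ (((I ×ˢ J).filter (fun p => p.2 < p.1)).card)

/-- Multiplication in the Grassmann algebra `G_n`. -/
def gmul {F : Type} [Field F] {n : ℕ} (f g : Gn n F) : Gn n F :=
  fun K => ∑ I ∈ K.powerset, (gsign I (K \ I) : F) * f I * g (K \ I)

/-- The odd superderivation `∂/∂e_j` of `G_n`. -/
def pd {F : Type} [Field F] {n : ℕ} (j : Fin n) (f : Gn n F) : Gn n F :=
  fun I => if j ∈ I then 0 else ((-1 : F) ^ ((I.filter (fun i => i < j)).card)) * f (insert j I)

/-- The grade involution of `G_n`: `e_I ↦ (-1)^{|I|} e_I`. -/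
def gInv {F : Type} [Field F] {n : ℕ} (f : Gn n F) : Gn n F :=
  fun I => ((-1 : F) ^ I.card) * f I

/-- The Poisson bracket `{f,g} = (-1)^{|f|} ∑_i (∂f/∂e_i)(∂g/∂e_i)` of `G_n`
(the sign `(-1)^{|f|}` is incorporated bilinearly via the grade involution). -/
def gbr {F : Type} [Field F] {n : ℕ} (f g : Gn n F) : Gn n F :=
  ∑ i : Fin n, gmul (pd i (gInv f)) (pd i g)

/-- `f ∈ G_n` is homogeneous of parity `p`. -/
def homog {F : Type} [Field F] {n : ℕ} (p : ZMod 2) (f : Gn n F) : Prop :=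
  ∀ I : Finset (Fin n), ((I.card : ZMod 2) ≠ p) → f I = 0

/-- `(-1)^p` as an element of the field `F`, for `p : ZMod 2`. -/
def sgn (F : Type) [Field F] (p : ZMod 2) : F := if p = 0 then 1 else -1
/-- The Kantor double `Kan(n) = J(G_n) = G_n ⊕ \bar{G_n}`: an element `(a,b)`
represents `a + \bar{b}`. -/
abbrev Kan (n : ℕ) (F : Type) := Gn n F × Gn n F

/-- Multiplication of the Kantor double `Kan(n)`; the signs `(-1)^{|g|}` of the
Kantor doubling process are incorporated bilinearly via the grade involution. -/
def kmul {F : Type} [Field F] {n : ℕ} (x y : Kan n F) : Kan n F :=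
  (gmul x.1 y.1 + gbr x.2 (gInv y.2), gmul x.1 y.2 + gmul x.2 (gInv y.1))

/-- The basis element `e_I` of `G_n` (coefficient `1` at `I`). -/
def single {F : Type} [Field F] {n : ℕ} (I : Finset (Fin n)) : Gn n F :=
  fun J => if J = I then 1 else 0

/-- The element `e_I ∈ Kan(n)`. -/
def eK {F : Type} [Field F] {n : ℕ} (I : Finset (Fin n)) : Kan n F := (single I, 0)

/-- The element `\bar{e_I} ∈ Kan(n)`. In particular `beK ∅ = \bar{1}`. -/
def beK {F : Type} [Field F] {n : ℕ} (I : Finset (Fin n)) : Kan n F := (0, single I)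

/-- Homogeneity of parity `p` in `Kan(n)` (the bar flips parity). -/
def kHomog {F : Type} [Field F] {n : ℕ} (p : ZMod 2) (x : Kan n F) : Prop :=
  homog p x.1 ∧ homog (p + 1) x.2

/-- Even part of an element of `G_n`. -/
def evenP {F : Type} [Field F] {n : ℕ} (f : Gn n F) : Gn n F :=
  fun I => if (I.card : ZMod 2) = 0 then f I else 0

/-- Odd part of an element of `G_n`. -/
def oddP {F : Type} [Field F] {n : ℕ} (f : Gn n F) : Gn n F :=
  fun I => if (I.card : ZMod 2) = 1 then f I else 0

/-- Even part of an element of `Kan(n)`. -/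
def kEvenPart {F : Type} [Field F] {n : ℕ} (x : Kan n F) : Kan n F := (evenP x.1, oddP x.2)

/-- Odd part of an element of `Kan(n)`. -/
def kOddPart {F : Type} [Field F] {n : ℕ} (x : Kan n F) : Kan n F := (oddP x.1, evenP x.2)

/-- A super vector space is encoded as a product `V0 × V1`; homogeneity of parity `p`. -/
def vHomog {V0 V1 : Type} [Zero V0] [Zero V1] (p : ZMod 2) (v : V0 × V1) : Prop :=
  if p = 0 then v.2 = 0 else v.1 = 0

/-- The left action of `Kan(n)` on a superbimodule determined from the right action
`act` by supercommutativity: `a·v = (-1)^{|a||v|} v·a` for homogeneous `a, v`. -/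
def leftAct {F : Type} [Field F] {n : ℕ} {V0 V1 : Type} [AddCommGroup V0] [Module F V0]
    [AddCommGroup V1] [Module F V1]
    (act : V0 × V1 →ₗ[F] Kan n F →ₗ[F] V0 × V1) (x : Kan n F) (w : V0 × V1) : V0 × V1 :=
  act w (kEvenPart x) + act ((w.1, 0) : V0 × V1) (kOddPart x)
    - act ((0, w.2) : V0 × V1) (kOddPart x)

/-- Multiplication in the split null extension `E = Kan(n) ⊕ V`. -/
def emul {F : Type} [Field F] {n : ℕ} {V0 V1 : Type} [AddCommGroup V0] [Module F V0]
    [AddCommGroup V1] [Module F V1]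
    (act : V0 × V1 →ₗ[F] Kan n F →ₗ[F] V0 × V1)
    (z w : Kan n F × (V0 × V1)) : Kan n F × (V0 × V1) :=
  (kmul z.1 w.1, act z.2 w.1 + leftAct act z.1 w.2)

/-- Homogeneity in the split null extension. -/
def eHomog {F : Type} [Field F] {n : ℕ} {V0 V1 : Type} [AddCommGroup V0] [Module F V0]
    [AddCommGroup V1] [Module F V1] (p : ZMod 2) (z : Kan n F × (V0 × V1)) : Prop :=
  kHomog p z.1 ∧ vHomog p z.2

/-- A supercommutative superalgebra structure `mul` (with homogeneity predicate `hom`)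
is Jordan: supercommutativity and the linearized super Jordan identity hold for
homogeneous elements. -/
def JordanSuper (F : Type) [Field F] {E : Type} [AddCommGroup E] [Module F E]
    (hom : ZMod 2 → E → Prop) (mul : E → E → E) : Prop :=
  (∀ (p q : ZMod 2) (x y : E), hom p x → hom q y → mul x y = sgn F (p * q) • mul y x) ∧
  (∀ (px py pz pt : ZMod 2) (x y z t : E),
      hom px x → hom py y → hom pz z → hom pt t →
      mul (mul (mul x y) z) t
        + sgn F (py * pz + py * pt + pz * pt) • mul (mul (mul x t) z) y
        + sgn F (px * py + px * pz + px * pt + pz * pt) • mul (mul (mul y t) z) x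
      = mul (mul x y) (mul z t) + sgn F (py * pz) • mul (mul x z) (mul y t)
        + sgn F (pt * (py + pz)) • mul (mul x t) (mul y z))

/-- `V = V0 ⊕ V1` with right action `act` is a Jordan superbimodule over `Kan(n)`:
the split null extension `Kan(n) ⊕ V` is a (graded) Jordan superalgebra. -/
def IsJordanBimod {F : Type} [Field F] {n : ℕ} {V0 V1 : Type} [AddCommGroup V0] [Module F V0]
    [AddCommGroup V1] [Module F V1]
    (act : V0 × V1 →ₗ[F] Kan n F →ₗ[F] V0 × V1) : Prop :=
  JordanSuper F (E := Kan n F × (V0 × V1)) eHomog (emul act) ∧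
  (∀ (p q : ZMod 2) (z w : Kan n F × (V0 × V1)),
      eHomog p z → eHomog q w → eHomog (p + q) (emul act z w))

section KanAux

variable {F : Type} [Field F] {n : ℕ}

lemma homog_zero (p : ZMod 2) : homog p (0 : Gn n F) := fun _ _ => rfl

lemma gmul_zero_right (f : Gn n F) : gmul f 0 = 0 := by
  funext K; simp [gmul]

lemma gmul_zero_left (f : Gn n F) : gmul 0 f = 0 := by
  funext K; simp [gmul]

lemma pd_zero (j : Fin n) : pd j (0 : Gn n F) = 0 := by
  funext I; simp [pd]

lemma gInv_zero : gInv (0 : Gn n F) = 0 := by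
  funext I; simp [gInv]

lemma gbr_zero_right (f : Gn n F) : gbr f 0 = 0 := by
  unfold gbr
  simp [pd_zero, gmul_zero_right]

lemma gbr_zero_left (f : Gn n F) : gbr 0 f = 0 := by
  unfold gbr
  simp [pd_zero, gInv_zero, gmul_zero_left]

lemma gInv_smul (c : F) (f : Gn n F) : gInv (c • f) = c • gInv f := by
  funext I; simp [gInv]; ring

lemma pd_smul (j : Fin n) (c : F) (f : Gn n F) : pd j (c • f) = c • pd j f := by
  funext I
  simp only [pd, Pi.smul_apply, smul_eq_mul]
  split <;> ring

lemma gmul_smul_left (c : F) (f g : Gn n F) : gmul (c • f) g = c • gmul f g := by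
  funext K
  simp only [gmul, Pi.smul_apply, smul_eq_mul, Finset.mul_sum]
  apply Finset.sum_congr rfl
  intro I _
  ring

lemma gmul_smul_right (c : F) (f g : Gn n F) : gmul f (c • g) = c • gmul f g := by
  funext K
  simp only [gmul, Pi.smul_apply, smul_eq_mul, Finset.mul_sum]
  apply Finset.sum_congr rfl
  intro I _
  ring

lemma gInv_single (K : Finset (Fin n)) :
    gInv (single K : Gn n F) = ((-1 : F) ^ K.card) • single K := by
  funext I
  by_cases h : I = K
  · subst h; simp [gInv, single]
  · simp [gInv, single, h]

lemma pd_single (j : Fin n) (K : Finset (Fin n)) :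
    pd j (single K : Gn n F) =
      if j ∈ K then
        ((-1 : F) ^ (((K.erase j).filter (fun i => i < j)).card)) • single (K.erase j)
      else 0 := by
  funext I
  by_cases hjI : j ∈ I
  · simp only [pd, if_pos hjI]
    split
    · rename_i hjK
      have hne : I ≠ K.erase j := fun h => (Finset.notMem_erase j K) (h ▸ hjI)
      simp [single, hne]
    · simp
  · simp only [pd, if_neg hjI]
    by_cases hIK : insert j I = K
    · have hjK : j ∈ K := hIK ▸ Finset.mem_insert_self j I
      have hIe : I = K.erase j := by
        rw [← hIK, Finset.erase_insert hjI]
      rw [if_pos hjK, Pi.smul_apply]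
      rw [← hIe, hIK]
      simp [single, smul_eq_mul]
    · have h1 : single K (insert j I) = (0 : F) := by simp [single, hIK]
      rw [h1, mul_zero]
      split
      · rename_i hjK
        have hne : I ≠ K.erase j := by
          intro h
          apply hIK
          rw [h, Finset.insert_erase hjK]
        simp [single, hne]
      · simp

lemma gmul_single_empty (f : Gn n F) : gmul (single ∅) f = f := by
  funext K
  unfold gmul
  rw [Finset.sum_eq_single_of_mem ∅ (Finset.empty_mem_powerset K)]
  · simp [single, gsign]
  · intro I _ hI
    simp [single, hI]

lemma gbr_single_empty_right (f : Gn n F) : gbr f (single ∅) = 0 := by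
  unfold gbr
  have h : ∀ i : Fin n, pd i (single (∅ : Finset (Fin n)) : Gn n F) = 0 := by
    intro i
    rw [pd_single]
    simp
  simp [h, gmul_zero_right]

lemma gbr_bar_one (f : Gn n F) : gbr f (gInv (single ∅)) = 0 := by
  rw [gInv_single]
  simp only [Finset.card_empty, pow_zero, one_smul]
  exact gbr_single_empty_right f

lemma kmul_beK_beK_empty (K : Finset (Fin n)) :
    kmul (beK K) (beK (∅ : Finset (Fin n))) = (0 : Kan n F) := by
  unfold kmul beK
  simp [gmul_zero_left, gmul_zero_right, gInv_zero, gbr_bar_one]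

lemma kmul_zero_left (x : Kan n F) : kmul 0 x = 0 := by
  unfold kmul
  have h1 : (0 : Kan n F).1 = 0 := rfl
  have h2 : (0 : Kan n F).2 = 0 := rfl
  rw [h1, h2]
  simp [gmul_zero_left, gbr_zero_left]

lemma kmul_zero_right (x : Kan n F) : kmul x 0 = 0 := by
  unfold kmul
  have h1 : (0 : Kan n F).1 = 0 := rfl
  have h2 : (0 : Kan n F).2 = 0 := rfl
  rw [h1, h2]
  simp [gmul_zero_right, gInv_zero, gbr_zero_right]

lemma erase_singleton' (k : Fin n) : ({k} : Finset (Fin n)).erase k = ∅ := by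
  ext x; simp [Finset.mem_erase]

lemma gbr_single_k (k : Fin n) (I : Finset (Fin n)) (hk : k ∉ I) :
    ∃ c : F, c ≠ 0 ∧
      gbr (single ({k} : Finset (Fin n))) (gInv (single (insert k I))) = c • (single I : Gn n F) := by
  classical
  set J := insert k I with hJdef
  have hkJ : k ∈ J := Finset.mem_insert_self k I
  set m := ((I.filter (fun i => i < k)).card) with hm
  have hne : ((-1 : F) ^ 1 * ((-1 : F) ^ J.card * (-1 : F) ^ m)) ≠ 0 := by
    apply mul_ne_zero (pow_ne_zero _ (by norm_num))
    exact mul_ne_zero (pow_ne_zero _ (by norm_num)) (pow_ne_zero _ (by norm_num))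
  refine ⟨(-1 : F) ^ 1 * ((-1 : F) ^ J.card * (-1 : F) ^ m), hne, ?_⟩
  unfold gbr
  rw [Fintype.sum_eq_single k]
  · rw [gInv_single, gInv_single, pd_smul, pd_smul, pd_single, pd_single]
    rw [if_pos (Finset.mem_singleton_self k), if_pos hkJ]
    rw [erase_singleton', Finset.erase_insert hk]
    simp only [Finset.filter_empty, Finset.card_empty, pow_zero, one_smul,
      Finset.card_singleton]
    rw [gmul_smul_left, gmul_smul_right, gmul_smul_right, gmul_single_empty]
    rw [smul_smul, smul_smul, hm, mul_assoc]
  · intro i hi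
    rw [gInv_single, pd_smul, pd_single]
    have : i ∉ ({k} : Finset (Fin n)) := by simp [hi]
    rw [if_neg this]
    rw [smul_zero, gmul_zero_left]

lemma kmul_bk_bJ (k : Fin n) (I : Finset (Fin n)) (hk : k ∉ I) :
    ∃ c : F, c ≠ 0 ∧
      kmul (beK {k}) (beK (insert k I)) = c • (eK I : Kan n F) := by
  obtain ⟨c, hc, hg⟩ := gbr_single_k (F := F) k I hk
  refine ⟨c, hc, ?_⟩
  unfold kmul beK eK
  simp only [gmul_zero_left, gmul_zero_right, gInv_zero, zero_add, hg]
  rw [Prod.smul_mk]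
  simp [gmul_zero_left, gInv_zero, gmul_zero_right]

lemma homog_single (K : Finset (Fin n)) : homog (K.card : ZMod 2) (single K : Gn n F) := by
  intro L hL
  by_cases h : L = K
  · subst h; exact absurd rfl hL
  · simp [single, h]

lemma zmod2_cases (a : ZMod 2) : a = 0 ∨ a = 1 := by
  revert a; decide

lemma evenP_add_oddP (f : Gn n F) : evenP f + oddP f = f := by
  funext I
  simp only [Pi.add_apply, evenP, oddP]
  rcases zmod2_cases ((I.card : ZMod 2)) with h | h
  · rw [if_pos h, if_neg (by rw [h]; decide), add_zero]
  · rw [if_neg (by rw [h]; decide), if_pos h, zero_add]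

lemma kEvenPart_add_kOddPart (x : Kan n F) : kEvenPart x + kOddPart x = x := by
  unfold kEvenPart kOddPart
  rw [Prod.mk_add_mk]
  rw [evenP_add_oddP]
  rw [show oddP x.2 + evenP x.2 = x.2 by rw [add_comm]; exact evenP_add_oddP x.2]

lemma kEvenPart_zero : kEvenPart (0 : Kan n F) = 0 := by
  unfold kEvenPart
  have : evenP (0 : Gn n F) = 0 := by funext I; simp [evenP]
  have h2 : oddP (0 : Gn n F) = 0 := by funext I; simp [oddP]
  rw [show (0 : Kan n F).1 = 0 from rfl, show (0 : Kan n F).2 = 0 from rfl, this, h2]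
  rfl

lemma kOddPart_zero : kOddPart (0 : Kan n F) = 0 := by
  unfold kOddPart
  have : evenP (0 : Gn n F) = 0 := by funext I; simp [evenP]
  have h2 : oddP (0 : Gn n F) = 0 := by funext I; simp [oddP]
  rw [show (0 : Kan n F).1 = 0 from rfl, show (0 : Kan n F).2 = 0 from rfl, this, h2]
  rfl

lemma evenP_smul (c : F) (f : Gn n F) : evenP (c • f) = c • evenP f := by
  funext I
  simp only [evenP, Pi.smul_apply, smul_eq_mul]
  split <;> simp

lemma oddP_smul (c : F) (f : Gn n F) : oddP (c • f) = c • oddP f := by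
  funext I
  simp only [oddP, Pi.smul_apply, smul_eq_mul]
  split <;> simp

lemma kEvenPart_smul (c : F) (x : Kan n F) : kEvenPart (c • x) = c • kEvenPart x := by
  unfold kEvenPart
  rw [show (c • x).1 = c • x.1 from rfl, show (c • x).2 = c • x.2 from rfl,
    evenP_smul, oddP_smul]
  rfl

lemma kOddPart_smul (c : F) (x : Kan n F) : kOddPart (c • x) = c • kOddPart x := by
  unfold kOddPart
  rw [show (c • x).1 = c • x.1 from rfl, show (c • x).2 = c • x.2 from rfl,
    evenP_smul, oddP_smul]
  rfl

lemma evenP_zero' : evenP (0 : Gn n F) = 0 := by funext I; simp [evenP]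

lemma oddP_zero' : oddP (0 : Gn n F) = 0 := by funext I; simp [oddP]

lemma evenP_single_even {K : Finset (Fin n)} (h : ((K.card : ZMod 2)) = 0) :
    evenP (single K : Gn n F) = single K := by
  funext J
  by_cases hJ : J = K
  · subst hJ; simp [evenP, h]
  · simp only [evenP, single, if_neg hJ]; split <;> rfl

lemma oddP_single_even {K : Finset (Fin n)} (h : ((K.card : ZMod 2)) = 0) :
    oddP (single K : Gn n F) = 0 := by
  funext J
  by_cases hJ : J = K
  · subst hJ
    simp only [oddP, h, Pi.zero_apply]
    rw [if_neg (by decide : ¬(0 : ZMod 2) = 1)]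
  · simp only [oddP, single, if_neg hJ, Pi.zero_apply]; split <;> rfl

lemma evenP_single_odd {K : Finset (Fin n)} (h : ((K.card : ZMod 2)) = 1) :
    evenP (single K : Gn n F) = 0 := by
  funext J
  by_cases hJ : J = K
  · subst hJ
    simp only [evenP, Pi.zero_apply]
    rw [if_neg (by rw [h]; decide)]
  · simp only [evenP, single, if_neg hJ, Pi.zero_apply]; split <;> rfl

lemma oddP_single_odd {K : Finset (Fin n)} (h : ((K.card : ZMod 2)) = 1) :
    oddP (single K : Gn n F) = single K := by
  funext J
  by_cases hJ : J = K
  · subst hJ; simp [oddP, h]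
  · simp only [oddP, single, if_neg hJ]; split <;> rfl

lemma kEvenPart_eK_even {K : Finset (Fin n)} (h : ((K.card : ZMod 2)) = 0) :
    kEvenPart (eK K : Kan n F) = eK K := by
  show (evenP (single K), oddP 0) = ((single K : Gn n F), 0)
  rw [evenP_single_even h, oddP_zero']

lemma kOddPart_eK_even {K : Finset (Fin n)} (h : ((K.card : ZMod 2)) = 0) :
    kOddPart (eK K : Kan n F) = 0 := by
  show (oddP (single K), evenP 0) = ((0 : Gn n F), 0)
  rw [oddP_single_even h, evenP_zero']

lemma kEvenPart_eK_odd {K : Finset (Fin n)} (h : ((K.card : ZMod 2)) = 1) :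
    kEvenPart (eK K : Kan n F) = 0 := by
  show (evenP (single K), oddP 0) = ((0 : Gn n F), 0)
  rw [evenP_single_odd h, oddP_zero']

lemma kOddPart_eK_odd {K : Finset (Fin n)} (h : ((K.card : ZMod 2)) = 1) :
    kOddPart (eK K : Kan n F) = eK K := by
  show (oddP (single K), evenP 0) = ((single K : Gn n F), 0)
  rw [oddP_single_odd h, evenP_zero']


section Mod

variable {V0 V1 : Type} [AddCommGroup V0] [Module F V0] [AddCommGroup V1] [Module F V1]
variable (act : V0 × V1 →ₗ[F] Kan n F →ₗ[F] V0 × V1)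

lemma leftAct_zero_module (x : Kan n F) : leftAct act x 0 = 0 := by
  unfold leftAct
  rw [show ((0 : V0 × V1).1, (0 : V1)) = (0 : V0 × V1) from rfl,
    show ((0 : V0), (0 : V0 × V1).2) = (0 : V0 × V1) from rfl]
  simp

lemma leftAct_zero_kan (w : V0 × V1) : leftAct act (0 : Kan n F) w = 0 := by
  unfold leftAct
  rw [kEvenPart_zero, kOddPart_zero]
  simp

lemma leftAct_smul (c : F) (x : Kan n F) (w : V0 × V1) :
    leftAct act (c • x) w = c • leftAct act x w := by
  unfold leftAct
  rw [kEvenPart_smul, kOddPart_smul]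
  simp [smul_sub]

lemma leftAct_of_snd_zero (x : Kan n F) (w : V0 × V1) (h : w.2 = 0) :
    leftAct act x w = act w x := by
  unfold leftAct
  rw [show (w.1, (0 : V1)) = w by rw [← h]]
  rw [show ((0 : V0), w.2) = (0 : V0 × V1) by rw [h]; rfl]
  simp only [map_zero, LinearMap.zero_apply, sub_zero]
  rw [← map_add, kEvenPart_add_kOddPart]

lemma leftAct_of_fst_zero (x : Kan n F) (w : V0 × V1) (h : w.1 = 0) :
    leftAct act x w = act w (kEvenPart x) - act w (kOddPart x) := by
  unfold leftAct
  rw [show (w.1, (0 : V1)) = (0 : V0 × V1) by rw [h]; rfl]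
  rw [show ((0 : V0), w.2) = w by rw [← h]]
  simp

lemma emul_pair_pair (P Q : Kan n F) :
    emul act (P, (0 : V0 × V1)) (Q, (0 : V0 × V1)) = (kmul P Q, 0) := by
  unfold emul
  simp [leftAct_zero_module]

lemma emul_pair_module (P : Kan n F) (v : V0 × V1) :
    emul act (P, (0 : V0 × V1)) ((0 : Kan n F), v) = (0, leftAct act P v) := by
  unfold emul
  simp [kmul_zero_right]

lemma emul_module_pair (u : V0 × V1) (Q : Kan n F) :
    emul act ((0 : Kan n F), u) (Q, (0 : V0 × V1)) = (0, act u Q) := by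
  unfold emul
  simp [kmul_zero_left, leftAct_zero_module]

lemma emul_zero_left (w : Kan n F × (V0 × V1)) : emul act 0 w = 0 := by
  unfold emul
  rw [show (0 : Kan n F × (V0 × V1)).1 = 0 from rfl,
    show (0 : Kan n F × (V0 × V1)).2 = 0 from rfl]
  rw [kmul_zero_left, leftAct_zero_kan]
  simp

lemma emul_zero_right (w : Kan n F × (V0 × V1)) : emul act w 0 = 0 := by
  unfold emul
  rw [show (0 : Kan n F × (V0 × V1)).1 = 0 from rfl,
    show (0 : Kan n F × (V0 × V1)).2 = 0 from rfl]
  rw [kmul_zero_right, leftAct_zero_module]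
  simp

lemma kHomog_beK (K : Finset (Fin n)) :
    kHomog ((K.card : ZMod 2) + 1) (beK K : Kan n F) := by
  constructor
  · exact homog_zero _
  · have h : (K.card : ZMod 2) + 1 + 1 = (K.card : ZMod 2) := by
      have : (1 : ZMod 2) + 1 = 0 := by decide
      rw [add_assoc, this, add_zero]
    rw [h]
    exact homog_single K

lemma eHomog_beK (K : Finset (Fin n)) :
    eHomog ((K.card : ZMod 2) + 1) ((beK K : Kan n F), (0 : V0 × V1)) := by
  refine ⟨kHomog_beK K, ?_⟩
  unfold vHomog
  split <;> rfl

lemma eHomog_module (p : ZMod 2) (v : V0 × V1) (hv : vHomog p v) :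
    eHomog p ((0 : Kan n F), v) :=
  ⟨⟨homog_zero _, homog_zero _⟩, hv⟩

lemma act_grade (hJ : IsJordanBimod act) (p : ZMod 2) (v : V0 × V1) (hv : vHomog p v) :
    vHomog (p + 1) (act v (beK ∅)) := by
  have h1 := hJ.2 p 1 ((0 : Kan n F), v) ((beK ∅ : Kan n F), (0 : V0 × V1))
    (eHomog_module p v hv)
    (by
      have := eHomog_beK (F := F) (n := n) (V0 := V0) (V1 := V1) (∅ : Finset (Fin n))
      simpa using this)
  have h2 : emul act ((0 : Kan n F), v) ((beK ∅ : Kan n F), (0 : V0 × V1))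
      = (0, act v (beK ∅)) := emul_module_pair act v (beK ∅)
  rw [h2] at h1
  exact h1.2

lemma star_lemma (hJ : IsJordanBimod act) (k : Fin n) (I : Finset (Fin n)) (hk : k ∉ I)
    (p : ZMod 2) (v : V0 × V1) (hv : vHomog p v) :
    act (leftAct act (eK I) v) (beK ∅) = leftAct act (eK I) (act v (beK ∅)) := by
  classical
  obtain ⟨c, hc, hbc⟩ := kmul_bk_bJ (F := F) k I hk
  set J : Finset (Fin n) := insert k I with hJdef
  have hkcard : (({k} : Finset (Fin n)).card : ZMod 2) + 1 = 0 := by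
    rw [Finset.card_singleton]; decide
  have hX : eHomog (0 : ZMod 2) ((beK {k} : Kan n F), (0 : V0 × V1)) := by
    have := eHomog_beK (F := F) (n := n) (V0 := V0) (V1 := V1) ({k} : Finset (Fin n))
    rwa [hkcard] at this
  have hY : eHomog ((J.card : ZMod 2) + 1) ((beK J : Kan n F), (0 : V0 × V1)) :=
    eHomog_beK J
  have hZ : eHomog p ((0 : Kan n F), v) := eHomog_module p v hv
  have hecard : ((∅ : Finset (Fin n)).card : ZMod 2) + 1 = 1 := by
    rw [Finset.card_empty]; decide
  have hT : eHomog (1 : ZMod 2) ((beK ∅ : Kan n F), (0 : V0 × V1)) := by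
    have := eHomog_beK (F := F) (n := n) (V0 := V0) (V1 := V1) (∅ : Finset (Fin n))
    rwa [hecard] at this
  have h := hJ.1.2 0 ((J.card : ZMod 2) + 1) p 1
    ((beK {k} : Kan n F), (0 : V0 × V1)) ((beK J : Kan n F), (0 : V0 × V1))
    ((0 : Kan n F), v) ((beK ∅ : Kan n F), (0 : V0 × V1))
    hX hY hZ hT
  -- compute all the products
  have hXY : emul act ((beK {k} : Kan n F), (0 : V0 × V1)) ((beK J : Kan n F), (0 : V0 × V1))
      = ((c • eK I : Kan n F), (0 : V0 × V1)) := by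
    rw [emul_pair_pair, hbc]
  have hXT : emul act ((beK {k} : Kan n F), (0 : V0 × V1)) ((beK ∅ : Kan n F), (0 : V0 × V1))
      = 0 := by
    rw [emul_pair_pair, kmul_beK_beK_empty]
    rfl
  have hYT : emul act ((beK J : Kan n F), (0 : V0 × V1)) ((beK ∅ : Kan n F), (0 : V0 × V1))
      = 0 := by
    rw [emul_pair_pair, kmul_beK_beK_empty]
    rfl
  have hZT : emul act ((0 : Kan n F), v) ((beK ∅ : Kan n F), (0 : V0 × V1))
      = (0, act v (beK ∅)) := emul_module_pair act v (beK ∅)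
  rw [hXY, hXT, hYT, hZT] at h
  simp only [emul_zero_left, emul_zero_right, emul_pair_module, emul_module_pair,
    smul_zero, add_zero, zero_add] at h
  have h2 : act (leftAct act (c • eK I) v) (beK ∅)
      = leftAct act (c • eK I) (act v (beK ∅)) := congrArg Prod.snd h
  rw [leftAct_smul, leftAct_smul, map_smul, LinearMap.smul_apply] at h2
  have h3 := congrArg (fun u : V0 × V1 => c⁻¹ • u) h2
  simpa [inv_smul_smul₀ hc] using h3

lemma piece (hJ : IsJordanBimod act) (k : Fin n) (I : Finset (Fin n)) (hk : k ∉ I)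
    (p : ZMod 2) (w : V0 × V1) (hw : vHomog p w) :
    act (act w (eK I)) (beK ∅)
      - sgn F ((I.card : ZMod 2)) • act (act w (beK ∅)) (eK I) = 0 := by
  have hstar := star_lemma act hJ k I hk p w hw
  have hu2 := act_grade act hJ p w hw
  set u := act w (beK ∅) with hu
  rcases zmod2_cases p with hp | hp
  · subst hp
    have hw2 : w.2 = 0 := by
      unfold vHomog at hw
      rwa [if_pos rfl] at hw
    have hu1 : u.1 = 0 := by
      rw [show (0 : ZMod 2) + 1 = 1 from rfl] at hu2
      unfold vHomog at hu2
      rwa [if_neg (by decide : (1 : ZMod 2) ≠ 0)] at hu2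
    rw [leftAct_of_snd_zero act _ w hw2] at hstar
    rw [leftAct_of_fst_zero act _ u hu1] at hstar
    rcases zmod2_cases ((I.card : ZMod 2)) with hI0 | hI1
    · rw [kEvenPart_eK_even hI0, kOddPart_eK_even hI0, map_zero, sub_zero] at hstar
      rw [hstar, hI0, show sgn F (0 : ZMod 2) = 1 by simp [sgn], one_smul, sub_self]
    · rw [kEvenPart_eK_odd hI1, kOddPart_eK_odd hI1, map_zero, zero_sub] at hstar
      rw [hstar, hI1, show sgn F (1 : ZMod 2) = -1 by simp [sgn]]
      simp
  · subst hp
    have hw1 : w.1 = 0 := by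
      unfold vHomog at hw
      rwa [if_neg (by decide : (1 : ZMod 2) ≠ 0)] at hw
    have hu2' : u.2 = 0 := by
      rw [show (1 : ZMod 2) + 1 = 0 by decide] at hu2
      unfold vHomog at hu2
      rwa [if_pos rfl] at hu2
    rw [leftAct_of_snd_zero act _ u hu2'] at hstar
    rw [leftAct_of_fst_zero act _ w hw1] at hstar
    rcases zmod2_cases ((I.card : ZMod 2)) with hI0 | hI1
    · rw [kEvenPart_eK_even hI0, kOddPart_eK_even hI0, map_zero, sub_zero] at hstar
      rw [hstar, hI0, show sgn F (0 : ZMod 2) = 1 by simp [sgn], one_smul, sub_self]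
    · rw [kEvenPart_eK_odd hI1, kOddPart_eK_odd hI1, map_zero, zero_sub,
        map_neg, LinearMap.neg_apply] at hstar
      have hstar' : act (act w (eK I)) (beK ∅) = -(act u (eK I)) := by
        rw [← hstar, neg_neg]
      rw [hstar', hI1, show sgn F (1 : ZMod 2) = -1 by simp [sgn]]
      simp


end Mod

end KanAux

/-- for a Jordan bimodule `V` over `Kan(n)` and a proper subset
`I ⊊ {1,...,n}`, the supercommutator `[R_{e_I}, R_{\bar{1}}]_s` vanishes on `V`. -/
theorem supercommutator_eK_bar_one {F : Type} [Field F] (hchar : (2 : F) ≠ 0)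
    {n : ℕ} (hn : 2 ≤ n)
    {V0 V1 : Type} [AddCommGroup V0] [Module F V0] [AddCommGroup V1] [Module F V1]
    (act : V0 × V1 →ₗ[F] Kan n F →ₗ[F] V0 × V1) (hJ : IsJordanBimod act) :
    ∀ I : Finset (Fin n), I ≠ Finset.univ →
      ∀ v : V0 × V1,
        act (act v (eK I)) (beK ∅)
          - sgn F ((I.card : ZMod 2) * ((0 : ZMod 2) + 1)) • act (act v (beK ∅)) (eK I)
          = 0 := by
  intro I hI v
  obtain ⟨k, hk⟩ : ∃ k : Fin n, k ∉ I := by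
    by_contra h
    push_neg at h
    exact hI (Finset.eq_univ_iff_forall.2 h)
  have hs : sgn F ((I.card : ZMod 2) * ((0 : ZMod 2) + 1)) = sgn F ((I.card : ZMod 2)) := by
    rw [zero_add, mul_one]
  rw [hs]
  have h0 : vHomog 0 ((v.1, 0) : V0 × V1) := by
    unfold vHomog
    rw [if_pos rfl]
  have h1 : vHomog 1 ((0, v.2) : V0 × V1) := by
    unfold vHomog
    rw [if_neg (by decide : (1 : ZMod 2) ≠ 0)]
  have p0 := piece act hJ k I hk 0 (v.1, 0) h0
  have p1 := piece act hJ k I hk 1 (0, v.2) h1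
  have hv : v = ((v.1, 0) : V0 × V1) + ((0, v.2) : V0 × V1) := by
    rw [Prod.mk_add_mk, add_zero, zero_add]
  rw [hv]
  simp only [map_add, LinearMap.add_apply, smul_add]
  rw [sub_eq_zero] at p0 p1
  rw [p0, p1]
  abel
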